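/- Fix an integer m ≥ 4 and κ ∈ (0, 1/(8m)). Let U and V be the smallest sets of formal expressions (identified modulo commutativity and associativity of the product) such that: X^k ∈ U for every multi-index k ∈ ℕ⁴; Ξ ∈ V; whenever τ₁, τ₂, τ₃ ∈ U then τ₁τ₂τ₃ ∈ V; whenever 1 ≤ k ≤ m−3 and τ₁, …, τ_{k+3} ∈ U then E^{k/2}(τ₁⋯τ_{k+3}) ∈ V; and I(τ) ∈ U whenever τ ∈ V. Assign homogeneities by |Ξ| = −5/2 − κ, |X^k| = 2k₀+k₁+k₂+k₃, |τσ| = |τ| + |σ|, |I(τ)| = |τ| + 2, and |E^β(τ)| = β + |τ|. Then for every γ ∈ ℝ, the set {τ ∈ U ∪ V : |τ| < γ} is finite. -/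
import Mathlib


/-- Formal expressions generating the regularity structure: monomials `X^k`, the noise
`Ξ`, triple products `τ₁τ₂τ₃`, expressions `E^{k/2}(τ₁⋯τ_{k+3})` (recorded as `Emul k`
applied to the list `[τ₁,…,τ_{k+3}]`), and abstract integration `I(τ)`. -/
inductive FExpr where
  | Xpow : (Fin 4 → ℕ) → FExpr
  | Xi : FExpr
  | prod3 : FExpr → FExpr → FExpr → FExpr
  | Emul : ℕ → List FExpr → FExpr
  | I : FExpr → FExpr

mutual
  /-- The homogeneity: `|Ξ| = −5/2 − κ`, `|X^k| = 2k₀+k₁+k₂+k₃`, `|τσ| = |τ|+|σ|`,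
  `|I(τ)| = |τ|+2`, `|E^{k/2}(τ₁⋯τ_{k+3})| = k/2 + Σ|τᵢ|`. -/
  noncomputable def homExpr (κ : ℝ) : FExpr → ℝ
    | .Xpow k => ((2 * k 0 + k 1 + k 2 + k 3 : ℕ) : ℝ)
    | .Xi => -5 / 2 - κ
    | .prod3 a b c => homExpr κ a + homExpr κ b + homExpr κ c
    | .Emul k L => (k : ℝ) / 2 + homList κ L
    | .I τ => homExpr κ τ + 2

  noncomputable def homList (κ : ℝ) : List FExpr → ℝ
    | [] => 0
    | τ :: L => homExpr κ τ + homList κ L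
end

mutual
  /-- The set `U`: monomials, and `I(τ)` for `τ ∈ V`. -/
  inductive InU (m : ℕ) : FExpr → Prop
    | X (k : Fin 4 → ℕ) : InU m (.Xpow k)
    | I (τ : FExpr) : InV m τ → InU m (.I τ)

  /-- The set `V`: `Ξ`, triple products of elements of `U`, and
  `E^{k/2}(τ₁⋯τ_{k+3})` for `1 ≤ k ≤ m−3` with all `τᵢ ∈ U`. -/
  inductive InV (m : ℕ) : FExpr → Prop
    | Xi : InV m .Xi
    | prod3 (a b c : FExpr) : InU m a → InU m b → InU m c → InV m (.prod3 a b c)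
    | E (k : ℕ) (L : List FExpr) : 1 ≤ k → k ≤ m - 3 → L.length = k + 3 →
        (∀ τ ∈ L, InU m τ) → InV m (.Emul k L)
end

mutual
  def sz : FExpr → ℕ
    | .Xpow k => 1 + (2 * k 0 + k 1 + k 2 + k 3)
    | .Xi => 1
    | .prod3 a b c => 1 + sz a + sz b + sz c
    | .Emul k L => 1 + k + szList L
    | .I τ => 1 + sz τ
  def szList : List FExpr → ℕ
    | [] => 0
    | τ :: L => sz τ + szList L
end

lemma sz_pos (τ : FExpr) : 1 ≤ sz τ := by
  cases τ <;> simp [sz] <;> omega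

lemma sz_mem {τ : FExpr} {L : List FExpr} (h : τ ∈ L) : sz τ ≤ szList L := by
  induction L with
  | nil => simp at h
  | cons a L ih =>
    rcases List.mem_cons.mp h with rfl | h
    · simp [szList]
    · have := ih h; simp [szList]; omega

lemma length_le_szList (L : List FExpr) : L.length ≤ szList L := by
  induction L with
  | nil => simp [szList]
  | cons a L ih => have := sz_pos a; simp [szList]; omega

lemma finite_lists {S : Set FExpr} (hS : S.Finite) :
    ∀ n, {L : List FExpr | L.length ≤ n ∧ ∀ τ ∈ L, τ ∈ S}.Finite := by
  intro n
  induction n with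
  | zero =>
    apply Set.Finite.subset (Set.finite_singleton ([] : List FExpr))
    rintro (_ | ⟨a, L⟩) ⟨h1, _⟩ <;> simp_all
  | succ n ih =>
    apply Set.Finite.subset (((hS.prod ih).image
      (fun p : FExpr × List FExpr => p.1 :: p.2)).insert [])
    rintro (_ | ⟨a, L⟩) ⟨h1, h2⟩
    · simp
    · right
      exact ⟨(a, L), ⟨h2 a (by simp), by simp at h1; exact ⟨h1, fun τ hτ => h2 τ (by simp [hτ])⟩⟩, rfl⟩

lemma finite_sz_lt : ∀ N, {τ : FExpr | sz τ < N}.Finite := by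
  intro N
  induction N using Nat.strong_induction_on with
  | _ N IH =>
    match N with
    | 0 => simp
    | (M+1) =>
      have hM : {τ : FExpr | sz τ < M}.Finite := IH M (Nat.lt_succ_self M)
      have hL : {L : List FExpr | szList L < M}.Finite := by
        apply Set.Finite.subset (finite_lists hM M)
        intro L hL
        exact ⟨le_trans (length_le_szList L) (le_of_lt hL),
          fun τ hτ => lt_of_le_of_lt (sz_mem hτ) hL⟩
      have hK : {k : Fin 4 → ℕ | ∀ i, k i ≤ M}.Finite := by
        have : {k : Fin 4 → ℕ | ∀ i, k i ≤ M} ⊆ Set.pi Set.univ (fun _ => Set.Iic M) := by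
          intro k hk i _; exact hk i
        exact Set.Finite.subset (Set.Finite.pi (fun _ => Set.finite_Iic M)) this
      apply Set.Finite.subset
        ((((((hK.image FExpr.Xpow).insert FExpr.Xi).union
          (((hM.prod (hM.prod hM)).image
            (fun p : FExpr × FExpr × FExpr => FExpr.prod3 p.1 p.2.1 p.2.2)))).union
          (((Set.finite_Iio M).prod hL).image
            (fun p : ℕ × List FExpr => FExpr.Emul p.1 p.2))).union
          (hM.image FExpr.I)))
      intro τ hτ
      simp only [Set.mem_setOf_eq] at hτ
      simp only [Set.mem_union, Set.mem_insert_iff, Set.mem_image, Set.mem_prod,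
        Set.mem_setOf_eq, Set.mem_Iio, Prod.exists]
      cases τ with
      | Xpow k =>
        simp only [sz] at hτ
        refine Or.inl (Or.inl (Or.inl (Or.inr ⟨k, fun i => ?_, rfl⟩)))
        have h0 : k 0 ≤ M := by omega
        have h1 : k 1 ≤ M := by omega
        have h2 : k 2 ≤ M := by omega
        have h3 : k 3 ≤ M := by omega
        fin_cases i
        · exact h0
        · exact h1
        · exact h2
        · exact h3
      | Xi => exact Or.inl (Or.inl (Or.inl (Or.inl rfl)))
      | prod3 a b c =>
        simp only [sz] at hτ
        have ha := sz_pos a; have hb := sz_pos b; have hc := sz_pos c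
        exact Or.inl (Or.inl (Or.inr ⟨a, b, c, ⟨by omega, by omega, by omega⟩, rfl⟩))
      | Emul k L =>
        simp only [sz] at hτ
        exact Or.inl (Or.inr ⟨k, L, ⟨by omega, by omega⟩, rfl⟩)
      | I σ =>
        simp only [sz] at hτ
        exact Or.inr ⟨σ, by omega, rfl⟩


lemma hom_lower (m : ℕ) (hm : 4 ≤ m) (κ δ b : ℝ) (hκ0 : 0 < κ) (hκ : κ < 1 / (8 * m))
    (hδ : δ = 1 / (4 * m)) (hb : b = -1/2 - κ - 2*δ) :
    ∀ n (τ : FExpr), sz τ ≤ n →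
      (InU m τ → δ * sz τ + b ≤ homExpr κ τ) ∧
      (InV m τ → δ * sz τ + (b + δ - 2) ≤ homExpr κ τ) := by
  have hm' : (4:ℝ) ≤ (m:ℝ) := by exact_mod_cast hm
  have hmpos : (0:ℝ) < 4 * m := by linarith
  have hδpos : 0 < δ := by rw [hδ]; positivity
  have hδ4 : δ * (4 * m) = 1 := by rw [hδ]; field_simp
  have hκ8 : κ * (8 * m) < 1 := by
    have h8 : (0:ℝ) < 8 * m := by linarith
    calc κ * (8*m) < (1/(8*m)) * (8*m) := by
          exact mul_lt_mul_of_pos_right hκ h8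
      _ = 1 := by field_simp
  have hδ16 : δ ≤ 1/16 := by
    nlinarith [mul_nonneg (by linarith : (0:ℝ) ≤ 4*(m:ℝ)-16) hδpos.le]
  have hκ32 : κ < 1/32 := by
    nlinarith [mul_nonneg (by linarith : (0:ℝ) ≤ 8*(m:ℝ)-32) hκ0.le]
  intro n
  induction n using Nat.strong_induction_on with
  | _ n IH =>
    intro τ hτn
    constructor
    · intro hU
      cases hU with
      | X k =>
        simp only [sz, homExpr]
        have hdd : (0:ℝ) ≤ ((2 * k 0 + k 1 + k 2 + k 3 : ℕ) : ℝ) := Nat.cast_nonneg _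
        have hmul : δ * ((2 * k 0 + k 1 + k 2 + k 3 : ℕ) : ℝ)
            ≤ ((2 * k 0 + k 1 + k 2 + k 3 : ℕ) : ℝ) :=
          mul_le_of_le_one_left hdd (by linarith)
        push_cast
        rw [hb]
        push_cast at hmul
        nlinarith [hmul]
      | I σ hV =>
        have hs : sz σ < n := by
          have h1 : sz (FExpr.I σ) = 1 + sz σ := rfl
          omega
        have hbd := ((IH (sz σ) hs) σ le_rfl).2 hV
        simp only [sz, homExpr]
        push_cast
        linarith
    · intro hV
      cases hV with
      | Xi =>
        simp only [sz, homExpr]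
        rw [hb]
        push_cast
        linarith
      | prod3 x y z hx hy hz =>
        have hsx : sz x < n := by
          have h1 : sz (FExpr.prod3 x y z) = 1 + sz x + sz y + sz z := rfl
          have := sz_pos y; have := sz_pos z
          omega
        have hsy : sz y < n := by
          have h1 : sz (FExpr.prod3 x y z) = 1 + sz x + sz y + sz z := rfl
          have := sz_pos x; have := sz_pos z
          omega
        have hsz : sz z < n := by
          have h1 : sz (FExpr.prod3 x y z) = 1 + sz x + sz y + sz z := rfl
          have := sz_pos x; have := sz_pos y
          omega
        have bx := ((IH (sz x) hsx) x le_rfl).1 hx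
        have by' := ((IH (sz y) hsy) y le_rfl).1 hy
        have bz := ((IH (sz z) hsz) z le_rfl).1 hz
        simp only [sz, homExpr]
        rw [hb] at *
        push_cast
        linarith
      | E k L hk1 hk2 hlen hall =>
        have hLn : szList L < n := by
          have h1 : sz (FExpr.Emul k L) = 1 + k + szList L := rfl
          omega
        have hlist : ∀ L' : List FExpr, (∀ τ ∈ L', τ ∈ L) →
            δ * szList L' + L'.length * b ≤ homList κ L' := by
          intro L'
          induction L' with
          | nil => simp [szList, homList]
          | cons a L'' ih =>
            intro hsub
            have haL : a ∈ L := hsub a (by simp)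
            have hUa : InU m a := hall a haL
            have hsa : sz a < n := lt_of_le_of_lt (sz_mem haL) hLn
            have hba := ((IH (sz a) hsa) a le_rfl).1 hUa
            have ht := ih (fun τ hτ => hsub τ (by simp [hτ]))
            simp only [szList, homList, List.length_cons]
            push_cast
            linarith
        have hL := hlist L (fun _ h => h)
        rw [hlen] at hL
        have hkm : (k:ℝ) + 2 ≤ (m:ℝ) := by
          have : k + 3 ≤ m := by omega
          have := (Nat.cast_le (α := ℝ)).mpr this
          push_cast at this
          linarith
        have e1 : ((k:ℝ)+2)*δ ≤ (m:ℝ)*δ := mul_le_mul_of_nonneg_right hkm hδpos.le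
        have e2 : ((k:ℝ)+2)*κ ≤ (m:ℝ)*κ := mul_le_mul_of_nonneg_right hkm hκ0.le
        have e3 : (m:ℝ)*δ = 1/4 := by linear_combination hδ4 / 4
        have e4 : (m:ℝ)*κ < 1/8 := by linear_combination hκ8 / 8
        simp only [sz, homExpr]
        rw [hb] at *
        push_cast
        push_cast at hL
        nlinarith [hL, e1, e2, e3, e4]

/-- Subcriticality: for `m ≥ 4` and `0 < κ < 1/(8m)`, the set of symbols in `U ∪ V`
of homogeneity less than any given `γ` is finite. -/
theorem stmt_17 (m : ℕ) (hm : 4 ≤ m) (κ : ℝ) (hκ0 : 0 < κ) (hκ : κ < 1 / (8 * m)) :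
    ∀ γ : ℝ, {τ : FExpr | (InU m τ ∨ InV m τ) ∧ homExpr κ τ < γ}.Finite := by
  intro γ
  have hm' : (4:ℝ) ≤ (m:ℝ) := by exact_mod_cast hm
  set δ : ℝ := 1/(4*m) with hδ
  set b : ℝ := -1/2 - κ - 2*δ with hb
  have hδpos : 0 < δ := by rw [hδ]; positivity
  have key := hom_lower m hm κ δ b hκ0 hκ hδ hb
  apply Set.Finite.subset (finite_sz_lt ⌈(γ - (b + δ - 2))/δ⌉₊)
  rintro τ ⟨hmem, hγ⟩
  have hδ2 : δ ≤ 2 := by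
    rw [hδ, div_le_iff₀ (by linarith : (0:ℝ) < 4*m)]
    linarith
  have hbound : δ * sz τ + (b + δ - 2) ≤ homExpr κ τ := by
    rcases hmem with hU | hV
    · have := (key (sz τ) τ le_rfl).1 hU
      linarith
    · exact (key (sz τ) τ le_rfl).2 hV
  show sz τ < ⌈(γ - (b + δ - 2))/δ⌉₊
  rw [Nat.lt_ceil, lt_div_iff₀ hδpos]
  linarith
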